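/- arXiv:2407.06734 — 2 statements merged into one kernel-verified Lean document; each statement's English description precedes it below -/
import Mathlib

section
/- Let a ≥ b ≥ 0 and N ∈ ℕ with N ≥ a, and define g_N : ℝ → ℝ by g_N = a·1_{(−∞,−1)} + N·1_{[−1,1)} + b·1_{[1,∞)}. Then Var(g_N) = 2N − a − b and Var(M g_N) = 2N − a − (a+b)/2. -/
/-
For `0 ≤ b ≤ a ≤ N`, both `g_N` and `M g_N` increase on `(-∞, 1)`, decrease on `[1, ∞)` and
reach their maximum `N` at `0`. Such a function `f` has total variation
`(max f - f(-∞)) + (max f - f(+∞))`: the lower bound comes from the partitions `-R < 0 < R`, the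
upper bound from the potential that records the climb from `f(-∞)` on the left and then the
descent on the right, which dominates every increment `|f y - f x|`. The averages of `g_N` are
explicit in the radius, and maximizing them gives `M g_N`, with `M g_N(-∞) = a` and
`M g_N(+∞) = (a + b) / 2`.
-/

open MeasureTheory

/-- Total variation over ℝ of a real-valued function. -/
noncomputable def totalVar (g : ℝ → ℝ) : ENNReal :=
  ⨆ φ : {φ : ℤ → ℝ // Monotone φ},
    ∑' m : ℤ, ENNReal.ofReal |g (φ.1 (m + 1)) - g (φ.1 m)|

/-- The centered Hardy–Littlewood maximal operator on ℝ. -/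
noncomputable def cHL (g : ℝ → ℝ) (x : ℝ) : ℝ :=
  ⨆ r : {r : ℝ // 0 < r}, (1 / (2 * r.1)) * ∫ t in (x - r.1)..(x + r.1), |g t|

open Set Filter Topology

theorem totalVar_le_of_abs_sub_le_sub (f P : ℝ → ℝ) (lo hi : ℝ)
    (hfP : ∀ x y, x ≤ y → |f y - f x| ≤ P y - P x)
    (hlo : ∀ x, lo ≤ P x) (hhi : ∀ x, P x ≤ hi) :
    totalVar f ≤ ENNReal.ofReal (hi - lo) := by
  refine iSup_le fun ⟨φ, hφ⟩ => ?_
  rw [ENNReal.tsum_eq_iSup_sum]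
  refine iSup_le fun s => ?_
  obtain ⟨n, hs⟩ : ∃ n : ℕ, s ⊆ Finset.Ico (-n : ℤ) n :=
    ⟨s.sup Int.natAbs + 1, fun m hm => by
      have := Finset.le_sup (f := Int.natAbs) hm
      simp only [Finset.mem_Ico]
      omega⟩
  have hstep : ∀ m : ℤ, |f (φ (m + 1)) - f (φ m)| ≤ P (φ (m + 1)) - P (φ m) :=
    fun m => hfP _ _ (hφ (Int.le_add_one le_rfl))
  calc ∑ m ∈ s, ENNReal.ofReal |f (φ (m + 1)) - f (φ m)|
      ≤ ∑ m ∈ Finset.Ico (-n : ℤ) n, ENNReal.ofReal (P (φ (m + 1)) - P (φ m)) :=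
        (Finset.sum_le_sum_of_subset hs).trans <| Finset.sum_le_sum fun m _ =>
          ENNReal.ofReal_le_ofReal (hstep m)
    _ = ENNReal.ofReal (P (φ n) - P (φ (-n))) := by
        rw [← ENNReal.ofReal_sum_of_nonneg fun m _ => (abs_nonneg _).trans (hstep m)]
        congr 1
        have := Finset.sum_Ico_int_sub n fun m => P (φ m)
        rw [Finset.sum_sub_distrib] at this ⊢
        linarith
    _ ≤ ENNReal.ofReal (hi - lo) :=
        ENNReal.ofReal_le_ofReal (by linarith [hlo (φ (-n)), hhi (φ n)])

theorem ofReal_add_le_totalVar (f : ℝ → ℝ) {x₀ x₁ x₂ : ℝ} (h₀₁ : x₀ ≤ x₁) (h₁₂ : x₁ ≤ x₂) :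
    ENNReal.ofReal (|f x₁ - f x₀| + |f x₂ - f x₁|) ≤ totalVar f := by
  let φ : ℤ → ℝ := fun m => if m ≤ 0 then x₀ else if m = 1 then x₁ else x₂
  have hφ : Monotone φ := by
    intro p q hpq
    simp only [φ]
    split_ifs <;> first | linarith | omega
  refine le_iSup_of_le (⟨φ, hφ⟩ : {φ : ℤ → ℝ // Monotone φ}) ?_
  rw [tsum_eq_sum (s := {0, 1}) fun m hm => ?_]
  · simp [φ, ENNReal.ofReal_add]
  · have : φ (m + 1) = φ m := by
      simp only [Finset.mem_insert, Finset.mem_singleton] at hm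
      simp only [φ]
      split_ifs <;> first | rfl | omega
    simp [this]

theorem ofReal_le_totalVar_of_tendsto (f : ℝ → ℝ) {L₁ L₂ : ℝ} (h₁ : Tendsto f atBot (𝓝 L₁))
    (h₂ : Tendsto f atTop (𝓝 L₂)) (x : ℝ) :
    ENNReal.ofReal (|f x - L₁| + |L₂ - f x|) ≤ totalVar f := by
  have hlim : Tendsto (fun R => ENNReal.ofReal (|f x - f (-R)| + |f R - f x|)) atTop
      (𝓝 (ENNReal.ofReal (|f x - L₁| + |L₂ - f x|))) :=
    ENNReal.tendsto_ofReal <| (tendsto_const_nhds.sub (h₁.comp tendsto_neg_atTop_atBot)).abs.add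
      (h₂.sub tendsto_const_nhds).abs
  refine le_of_tendsto hlim ((eventually_ge_atTop |x|).mono fun R hR => ?_)
  exact ofReal_add_le_totalVar f (by linarith [neg_abs_le x]) ((le_abs_self x).trans hR)

theorem totalVar_eq_of_monotoneOn_of_antitoneOn (f : ℝ → ℝ) {c x₀ L₁ L₂ : ℝ}
    (hmono : MonotoneOn f (Iio c)) (hanti : AntitoneOn f (Ici c)) (hmax : ∀ x, f x ≤ f x₀)
    (h₁ : Tendsto f atBot (𝓝 L₁)) (h₂ : Tendsto f atTop (𝓝 L₂)) :
    totalVar f = ENNReal.ofReal (f x₀ - L₁ + (f x₀ - L₂)) := by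
  have hL₁ : ∀ x < c, L₁ ≤ f x := fun x hx => le_of_tendsto h₁ <|
    (eventually_le_atBot x).mono fun y hy => hmono (hy.trans_lt hx) hx hy
  have hL₂ : ∀ x, c ≤ x → L₂ ≤ f x := fun x hx => le_of_tendsto h₂ <|
    (eventually_ge_atTop x).mono fun y hy => hanti hx (hx.trans hy) hy
  have hL₁x₀ : L₁ ≤ f x₀ := le_of_tendsto' h₁ hmax
  have hL₂x₀ : L₂ ≤ f x₀ := le_of_tendsto' h₂ hmax
  apply le_antisymm
  · let P : ℝ → ℝ := fun x => if x < c then f x - L₁ else (f x₀ - L₁) + (f x₀ - f x)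
    have hfP : ∀ x y, x ≤ y → |f y - f x| ≤ P y - P x := by
      intro x y hxy
      simp only [P]
      split_ifs with hy hx hx
      · rw [abs_of_nonneg (sub_nonneg.2 (hmono (hxy.trans_lt hy) hy hxy))]; linarith
      · exact absurd (hxy.trans_lt hy) hx
      · rw [abs_sub_le_iff]; constructor <;> linarith [hmax x, hmax y]
      · rw [abs_of_nonpos (sub_nonpos.2 (hanti (not_lt.1 hx) (not_lt.1 hy) hxy))]; linarith
    refine (totalVar_le_of_abs_sub_le_sub f P 0 (f x₀ - L₁ + (f x₀ - L₂)) hfP (fun x => ?_)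
      (fun x => ?_)).trans_eq (by rw [sub_zero])
    · simp only [P]
      split_ifs with hx
      · linarith [hL₁ x hx]
      · linarith [hmax x]
    · simp only [P]
      split_ifs with hx
      · linarith [hmax x]
      · linarith [hL₂ x (not_lt.1 hx)]
  · have := ofReal_le_totalVar_of_tendsto f h₁ h₂ x₀
    rwa [abs_of_nonneg (sub_nonneg.2 hL₁x₀), abs_of_nonpos (sub_nonpos.2 hL₂x₀), neg_sub] at this

theorem integral_indicator_Ici_one (c : ℝ) {u v : ℝ} (huv : u ≤ v) :
    ∫ t in u..v, (Ici c).indicator (1 : ℝ → ℝ) t = max v c - max u c := by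
  have hc : (Ici c ∩ Ioc u v : Set ℝ) =ᵐ[volume] (Ioi c ∩ Ioc u v : Set ℝ) :=
    Ioi_ae_eq_Ici.symm.inter (ae_eq_refl _)
  rw [intervalIntegral.integral_of_le huv, integral_indicator_one measurableSet_Ici,
    measureReal_restrict_apply measurableSet_Ici, measureReal_congr hc, inter_comm, Ioc_inter_Ioi,
    Real.volume_real_Ioc]
  simp only [max_def]
  split_ifs <;> linarith

noncomputable def threeStep (a N b x : ℝ) : ℝ :=
  if x < -1 then a else if x < 1 then N else b

/-- `threeStep a N b` averaged over `[x - r, x + r]`, for `r > 0`. -/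
noncomputable def threeStepAverage (a N b x r : ℝ) : ℝ :=
  (a * (2 * r) + (N - a) * (max (x + r) (-1) - max (x - r) (-1))
    + (b - N) * (max (x + r) 1 - max (x - r) 1)) / (2 * r)

/-- The maximal function of `threeStep a N b` when `0 ≤ b ≤ a ≤ N`: the optimal radius is `1 - x`
for `x ≤ -1`, any radius keeping the ball inside `[-1, 1]` for `|x| < 1`, and for `x ≥ 1` either
`x + 1` or `r → ∞`. -/
noncomputable def threeStepMaximal (a N b x : ℝ) : ℝ :=
  if x ≤ -1 then a + (N - a) / (1 - x)
  else if x < 1 then N else max (b + (N - b) / (1 + x)) ((a + b) / 2)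

section ThreeStep

variable {a N b : ℝ}

theorem threeStep_zero : threeStep a N b 0 = N := by
  norm_num [threeStep]

theorem threeStep_of_lt_neg_one {x : ℝ} (hx : x < -1) : threeStep a N b x = a :=
  if_pos hx

theorem threeStep_of_one_le {x : ℝ} (hx : 1 ≤ x) : threeStep a N b x = b := by
  rw [threeStep, if_neg (by linarith), if_neg (not_lt.2 hx)]

theorem threeStep_le (haN : a ≤ N) (hbN : b ≤ N) (x : ℝ) : threeStep a N b x ≤ N := by
  unfold threeStep
  split_ifs <;> linarith

theorem monotoneOn_threeStep (haN : a ≤ N) : MonotoneOn (threeStep a N b) (Iio 1) := by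
  intro x _ y (hy : y < 1) hxy
  rw [threeStep, threeStep, if_pos (hxy.trans_lt hy), if_pos hy]
  split_ifs <;> linarith

theorem antitoneOn_threeStep : AntitoneOn (threeStep a N b) (Ici 1) := by
  intro x hx y hy _
  rw [threeStep_of_one_le hx, threeStep_of_one_le hy]

theorem tendsto_threeStep_atBot : Tendsto (threeStep a N b) atBot (𝓝 a) :=
  tendsto_const_nhds.congr' <|
    (eventually_lt_atBot (-1)).mono fun _ hx => (threeStep_of_lt_neg_one hx).symm

theorem tendsto_threeStep_atTop : Tendsto (threeStep a N b) atTop (𝓝 b) :=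
  tendsto_const_nhds.congr' <|
    (eventually_ge_atTop 1).mono fun _ hx => (threeStep_of_one_le hx).symm

theorem threeStep_eq_add_indicator (x : ℝ) :
    threeStep a N b x =
      a + (N - a) * (Ici (-1)).indicator 1 x + (b - N) * (Ici 1).indicator 1 x := by
  simp only [threeStep, indicator_apply, mem_Ici, Pi.one_apply]
  split_ifs <;> first | (exfalso; linarith) | ring

theorem integral_threeStep {u v : ℝ} (huv : u ≤ v) :
    ∫ t in u..v, threeStep a N b t =
      a * (v - u) + (N - a) * (max v (-1) - max u (-1)) + (b - N) * (max v 1 - max u 1) := by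
  have hind : ∀ c : ℝ, IntervalIntegrable ((Ici c).indicator (1 : ℝ → ℝ)) volume u v :=
    fun c => intervalIntegrable_iff.2 <|
      (integrableOn_const measure_Ioc_lt_top.ne).indicator measurableSet_Ici
  simp_rw [threeStep_eq_add_indicator]
  rw [intervalIntegral.integral_add (intervalIntegrable_const.add ((hind _).const_mul _))
      ((hind _).const_mul _), intervalIntegral.integral_add intervalIntegrable_const
      ((hind _).const_mul _), intervalIntegral.integral_const_mul,
    intervalIntegral.integral_const_mul, intervalIntegral.integral_const,
    integral_indicator_Ici_one _ huv, integral_indicator_Ici_one _ huv, smul_eq_mul]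
  ring

theorem cHL_threeStep_eq_iSup (ha : 0 ≤ a) (hN : 0 ≤ N) (hb : 0 ≤ b) (x : ℝ) :
    cHL (threeStep a N b) x = ⨆ r : {r : ℝ // 0 < r}, threeStepAverage a N b x r := by
  have habs : ∀ t, |threeStep a N b t| = threeStep a N b t := fun t =>
    abs_of_nonneg (by unfold threeStep; split_ifs <;> assumption)
  simp_rw [cHL, habs]
  congr 1
  ext ⟨r, hr⟩
  rw [integral_threeStep (by linarith), threeStepAverage]
  field_simp
  ring

theorem threeStepAverage_le (haN : a ≤ N) (hbN : b ≤ N) (x : ℝ) {r : ℝ} (hr : 0 < r) :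
    threeStepAverage a N b x r ≤ N := by
  have h₁ : max (x + r) (-1) - max (x - r) (-1) ≤ (x + r) - (x - r) := by
    simp only [max_def]
    split_ifs <;> linarith
  have h₂ : max (x - r) 1 ≤ max (x + r) 1 := max_le_max (by linarith) le_rfl
  rw [threeStepAverage, div_le_iff₀ (by positivity)]
  nlinarith [mul_le_mul_of_nonneg_left h₁ (sub_nonneg.2 haN),
    mul_nonneg (sub_nonneg.2 hbN) (sub_nonneg.2 h₂)]

theorem threeStepAverage_le_of_le_neg_one (hab : b ≤ a) (haN : a ≤ N) {x r : ℝ} (hx : x ≤ -1)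
    (hr : 0 < r) : threeStepAverage a N b x r ≤ a + (N - a) / (1 - x) := by
  have h1x : 0 < 1 - x := by linarith
  rw [threeStepAverage, max_eq_right (by linarith : x - r ≤ -1),
    max_eq_right (by linarith : x - r ≤ 1), add_div' _ _ _ h1x.ne',
    div_le_div_iff₀ (by positivity) h1x]
  rcases le_total (x + r) (-1) with h₁ | h₁
  · rw [max_eq_right h₁, max_eq_right (by linarith : x + r ≤ 1)]
    nlinarith [mul_nonneg hr.le (sub_nonneg.2 haN)]
  rw [max_eq_left h₁]
  rcases le_total (x + r) 1 with h₂ | h₂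
  · rw [max_eq_right h₂]
    nlinarith [mul_nonneg (mul_nonneg (sub_nonneg.2 haN) (by linarith : (0 : ℝ) ≤ -1 - x))
      (by linarith : (0 : ℝ) ≤ 1 - x - r)]
  · rw [max_eq_left h₂]
    have hE : 0 ≤ 2 * N - 2 * b + (a - b) * (-1 - x) := by
      nlinarith [mul_nonneg (sub_nonneg.2 hab) (by linarith : (0 : ℝ) ≤ -1 - x)]
    nlinarith [mul_nonneg (by linarith : (0 : ℝ) ≤ r - 1 + x) hE]

theorem threeStepAverage_le_of_one_le (hab : b ≤ a) (hbN : b ≤ N) {x r : ℝ} (hx : 1 ≤ x)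
    (hr : 0 < r) : threeStepAverage a N b x r ≤ max (b + (N - b) / (1 + x)) ((a + b) / 2) := by
  have h1x : 0 < 1 + x := by linarith
  rw [threeStepAverage, max_eq_left (by linarith : -1 ≤ x + r),
    max_eq_left (by linarith : 1 ≤ x + r)]
  rcases le_total 1 (x - r) with h₁ | h₁
  · rw [max_eq_left (by linarith : -1 ≤ x - r), max_eq_left h₁]
    refine le_trans ?_ (le_max_right _ _)
    rw [div_le_iff₀ (by positivity)]
    nlinarith [mul_nonneg hr.le (sub_nonneg.2 hab)]
  rw [max_eq_right h₁]
  rcases le_total (-1) (x - r) with h₂ | h₂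
  · rw [max_eq_left h₂]
    refine le_trans ?_ (le_max_left _ _)
    rw [add_div' _ _ _ h1x.ne', div_le_div_iff₀ (by positivity) h1x]
    nlinarith [mul_nonneg (mul_nonneg (sub_nonneg.2 hbN) (by linarith : (0 : ℝ) ≤ x - 1))
      (by linarith : (0 : ℝ) ≤ x + 1 - r)]
  rw [max_eq_right h₂]
  rcases le_total ((N - a) * (x + 1) + (b - N) * (x - 1)) 0 with hK | hK
  · refine le_trans ?_ (le_max_right _ _)
    rw [div_le_iff₀ (by positivity)]
    nlinarith
  · refine le_trans ?_ (le_max_left _ _)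
    rw [add_div' _ _ _ h1x.ne', div_le_div_iff₀ (by positivity) h1x]
    nlinarith [mul_nonneg hK (by linarith : (0 : ℝ) ≤ r - (x + 1))]

theorem threeStepAverage_one_sub {x : ℝ} (hx : x ≤ -1) :
    threeStepAverage a N b x (1 - x) = a + (N - a) / (1 - x) := by
  have : 1 - x ≠ 0 := by linarith
  rw [threeStepAverage, max_eq_left (by linarith : -1 ≤ x + (1 - x)),
    max_eq_right (by linarith : x - (1 - x) ≤ -1), max_eq_right (by linarith : x + (1 - x) ≤ 1),
    max_eq_right (by linarith : x - (1 - x) ≤ 1)]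
  field_simp
  ring

theorem threeStepAverage_of_Icc_subset {x r : ℝ} (hr : 0 < r) (h₁ : -1 ≤ x - r)
    (h₂ : x + r ≤ 1) : threeStepAverage a N b x r = N := by
  rw [threeStepAverage, max_eq_left (by linarith : -1 ≤ x + r), max_eq_left h₁,
    max_eq_right h₂, max_eq_right (by linarith : x - r ≤ 1)]
  field_simp
  ring

theorem threeStepAverage_add_one {x : ℝ} (hx : 1 ≤ x) :
    threeStepAverage a N b x (x + 1) = b + (N - b) / (1 + x) := by
  have : 1 + x ≠ 0 := by linarith
  rw [threeStepAverage, max_eq_left (by linarith : -1 ≤ x + (x + 1)),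
    max_eq_right (by linarith : x - (x + 1) ≤ -1), max_eq_left (by linarith : 1 ≤ x + (x + 1)),
    max_eq_right (by linarith : x - (x + 1) ≤ 1)]
  field_simp
  ring

theorem tendsto_threeStepAverage_atTop (x : ℝ) :
    Tendsto (threeStepAverage a N b x) atTop (𝓝 ((a + b) / 2)) := by
  have hlim : Tendsto (fun r => (a + b) / 2 + ((N - a) * (x + 1) + (b - N) * (x - 1)) / (2 * r))
      atTop (𝓝 ((a + b) / 2)) := by
    simpa using tendsto_const_nhds.add
      (tendsto_const_nhds.div_atTop (tendsto_id.const_mul_atTop (two_pos : (0 : ℝ) < 2)))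
  refine hlim.congr' ((eventually_ge_atTop (|x| + 1)).mono fun r hr => ?_)
  have := le_abs_self x
  have := neg_abs_le x
  have : r ≠ 0 := by linarith
  rw [threeStepAverage, max_eq_left (by linarith : -1 ≤ x + r),
    max_eq_right (by linarith : x - r ≤ -1), max_eq_left (by linarith : 1 ≤ x + r),
    max_eq_right (by linarith : x - r ≤ 1)]
  field_simp
  ring

theorem cHL_threeStep (hb : 0 ≤ b) (hab : b ≤ a) (haN : a ≤ N) (x : ℝ) :
    cHL (threeStep a N b) x = threeStepMaximal a N b x := by
  have : Nonempty {r : ℝ // 0 < r} := ⟨⟨1, one_pos⟩⟩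
  rw [cHL_threeStep_eq_iSup (by linarith) (by linarith) hb]
  refine ciSup_eq_of_forall_le_of_forall_lt_exists_gt (fun ⟨r, hr⟩ => ?_) fun w hw => ?_
  · unfold threeStepMaximal
    split_ifs with h₁ h₂
    · exact threeStepAverage_le_of_le_neg_one hab haN h₁ hr
    · exact threeStepAverage_le haN (hab.trans haN) x hr
    · exact threeStepAverage_le_of_one_le hab (hab.trans haN) (not_lt.1 h₂) hr
  unfold threeStepMaximal at hw
  split_ifs at hw with h₁ h₂
  · exact ⟨⟨1 - x, by linarith⟩, hw.trans_eq (threeStepAverage_one_sub h₁).symm⟩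
  · have hr : 0 < min (x + 1) (1 - x) := lt_min (by linarith) (by linarith)
    refine ⟨⟨_, hr⟩, hw.trans_eq (threeStepAverage_of_Icc_subset hr ?_ ?_).symm⟩
    · linarith [min_le_left (x + 1) (1 - x)]
    · linarith [min_le_right (x + 1) (1 - x)]
  rcases lt_max_iff.1 hw with hw | hw
  · exact ⟨⟨x + 1, by linarith⟩, hw.trans_eq (threeStepAverage_add_one (not_lt.1 h₂)).symm⟩
  · obtain ⟨r, hwr, hr⟩ := (((tendsto_threeStepAverage_atTop x).eventually
      (lt_mem_nhds hw)).and (eventually_gt_atTop 0)).exists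
    exact ⟨⟨r, hr⟩, hwr⟩

theorem threeStepMaximal_zero : threeStepMaximal a N b 0 = N := by
  norm_num [threeStepMaximal]

theorem threeStepMaximal_of_le_neg_one {x : ℝ} (hx : x ≤ -1) :
    threeStepMaximal a N b x = a + (N - a) / (1 - x) :=
  if_pos hx

theorem threeStepMaximal_of_one_le {x : ℝ} (hx : 1 ≤ x) :
    threeStepMaximal a N b x = max (b + (N - b) / (1 + x)) ((a + b) / 2) := by
  rw [threeStepMaximal, if_neg (by linarith), if_neg (not_lt.2 hx)]

theorem threeStepMaximal_le (haN : a ≤ N) (hbN : b ≤ N) (x : ℝ) :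
    threeStepMaximal a N b x ≤ N := by
  unfold threeStepMaximal
  split_ifs with h₁ h₂
  · linarith [div_le_self (sub_nonneg.2 haN) (by linarith : (1 : ℝ) ≤ 1 - x)]
  · exact le_rfl
  · refine max_le ?_ (by linarith)
    linarith [div_le_self (sub_nonneg.2 hbN) (by linarith : (1 : ℝ) ≤ 1 + x)]

theorem monotoneOn_threeStepMaximal (haN : a ≤ N) (hbN : b ≤ N) :
    MonotoneOn (threeStepMaximal a N b) (Iio 1) := by
  intro x _ y (hy : y < 1) hxy
  by_cases hy₁ : y ≤ -1
  · rw [threeStepMaximal_of_le_neg_one (hxy.trans hy₁), threeStepMaximal_of_le_neg_one hy₁]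
    gcongr
  · exact (threeStepMaximal_le haN hbN x).trans_eq ((if_neg hy₁).trans (if_pos hy)).symm

theorem antitoneOn_threeStepMaximal (hbN : b ≤ N) :
    AntitoneOn (threeStepMaximal a N b) (Ici 1) := by
  intro x (hx : 1 ≤ x) y hy hxy
  rw [threeStepMaximal_of_one_le hx, threeStepMaximal_of_one_le hy]
  gcongr

theorem tendsto_threeStepMaximal_atBot : Tendsto (threeStepMaximal a N b) atBot (𝓝 a) := by
  have h : Tendsto (fun x : ℝ => a + (N - a) / (1 - x)) atBot (𝓝 a) := by
    simpa [sub_eq_add_neg] using tendsto_const_nhds.add <| tendsto_const_nhds.div_atTop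
      (tendsto_atTop_add_const_left atBot (1 : ℝ) tendsto_neg_atBot_atTop)
  exact h.congr' <|
    (eventually_le_atBot (-1)).mono fun _ hx => (threeStepMaximal_of_le_neg_one hx).symm

theorem tendsto_threeStepMaximal_atTop (hab : b ≤ a) :
    Tendsto (threeStepMaximal a N b) atTop (𝓝 ((a + b) / 2)) := by
  have hb : Tendsto (fun x : ℝ => b + (N - b) / (1 + x)) atTop (𝓝 b) := by
    simpa using tendsto_const_nhds.add <| tendsto_const_nhds.div_atTop
      (tendsto_atTop_add_const_left atTop (1 : ℝ) tendsto_id)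
  have h := hb.max (tendsto_const_nhds (x := (a + b) / 2))
  rw [max_eq_right (by linarith : b ≤ (a + b) / 2)] at h
  exact h.congr' <|
    (eventually_ge_atTop 1).mono fun _ hx => (threeStepMaximal_of_one_le hx).symm

end ThreeStep

theorem stmt8 (a b : ℝ) (N : ℕ) (hb : 0 ≤ b) (hab : b ≤ a) (hNa : a ≤ N)
    (g : ℝ → ℝ)
    (hgdef : ∀ x : ℝ, g x = if x < -1 then a else if x < 1 then (N : ℝ) else b) :
    totalVar g = ENNReal.ofReal (2 * N - a - b) ∧
      totalVar (cHL g) = ENNReal.ofReal (2 * N - a - (a + b) / 2) := by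
  obtain rfl : g = threeStep a N b := funext hgdef
  have hbN : b ≤ N := hab.trans hNa
  constructor
  · rw [totalVar_eq_of_monotoneOn_of_antitoneOn _ (monotoneOn_threeStep hNa) antitoneOn_threeStep
      (fun x => (threeStep_le hNa hbN x).trans_eq threeStep_zero.symm) tendsto_threeStep_atBot
      tendsto_threeStep_atTop, threeStep_zero]
    congr 1
    ring
  · rw [funext (cHL_threeStep hb hab hNa), totalVar_eq_of_monotoneOn_of_antitoneOn _
      (monotoneOn_threeStepMaximal hNa hbN) (antitoneOn_threeStepMaximal hbN)
      (fun x => (threeStepMaximal_le hNa hbN x).trans_eq threeStepMaximal_zero.symm)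
      tendsto_threeStepMaximal_atBot (tendsto_threeStepMaximal_atTop hab), threeStepMaximal_zero]
    congr 1
    ring
end

section
/- Let G : ℤ → [0,∞) be of bounded variation and suppose the uncentered discrete maximal function M̃G has a local maximum at n ∈ ℤ, i.e., there exist n' < n < n'' with max{M̃G(n'), M̃G(n'')} < M̃G(n) = max{M̃G(y) : n' ≤ y ≤ n''}. Then M̃G(n) = G(n). -/
/-!
A function of bounded variation is bounded, so `uHL G n` is a genuine supremum of window
averages. A window around `n` whose average exceeds `max (uHL G n') (uHL G n'')` cannot contain
`n'` or `n''`, so only finitely many windows compete and the supremum at `n` is attained by a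
window `[l, r] ⊆ (n', n'')`. On that window `G ≤ uHL G ≤ uHL G n`, so its average can equal
`uHL G n` only if `G = uHL G n` at every point of it, in particular at `n`.
-/

noncomputable def varZ (G : ℤ → ℝ) : ENNReal :=
  ∑' n : ℤ, ENNReal.ofReal |G (n + 1) - G n|

noncomputable def uHL (G : ℤ → ℝ) (n : ℤ) : ℝ :=
  ⨆ p : ℕ × ℕ, (1 / ((p.1 : ℝ) + (p.2 : ℝ) + 1)) *
    ∑ y ∈ Finset.Icc (n - (p.1 : ℤ)) (n + (p.2 : ℤ)), G y

open Finset

theorem ofReal_abs_sub_le_sum_Ico (G : ℤ → ℝ) {a b : ℤ} (hab : a ≤ b) :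
    ENNReal.ofReal |G b - G a| ≤ ∑ m ∈ Ico a b, ENNReal.ofReal |G (m + 1) - G m| := by
  induction b, hab using Int.leInduction with
  | base => simp
  | succ b hab ih =>
    have hIco : Ico a (b + 1) = insert b (Ico a b) := by ext; simp; omega
    rw [hIco, sum_insert (by simp)]
    calc ENNReal.ofReal |G (b + 1) - G a|
        ≤ ENNReal.ofReal (|G (b + 1) - G b| + |G b - G a|) :=
          ENNReal.ofReal_le_ofReal (abs_sub_le _ _ _)
      _ ≤ _ := ENNReal.ofReal_add_le.trans (by gcongr)

theorem ofReal_abs_sub_le_varZ (G : ℤ → ℝ) {a b : ℤ} (hab : a ≤ b) :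
    ENNReal.ofReal |G b - G a| ≤ varZ G :=
  (ofReal_abs_sub_le_sum_Ico G hab).trans (ENNReal.sum_le_tsum _)

theorem bddAbove_range_of_varZ_ne_top {G : ℤ → ℝ} (hBV : varZ G ≠ ⊤) :
    BddAbove (Set.range G) := by
  refine ⟨G 0 + (varZ G).toReal, ?_⟩
  rintro _ ⟨m, rfl⟩
  have h : |G m - G 0| ≤ (varZ G).toReal := by
    rw [← ENNReal.ofReal_le_iff_le_toReal hBV]
    rcases le_total 0 m with hm | hm
    · exact ofReal_abs_sub_le_varZ G hm
    · rw [abs_sub_comm]; exact ofReal_abs_sub_le_varZ G hm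
  linarith [le_abs_self (G m - G 0)]

theorem exists_eq_ciSup_of_finite_superlevel {ι α : Type*} [Nonempty ι]
    [ConditionallyCompleteLinearOrder α] {f : ι → α} (hf : BddAbove (Set.range f)) {c : α}
    (hc : c < ⨆ i, f i) (hfin : {i | c < f i}.Finite) : ∃ i, c < f i ∧ f i = ⨆ i, f i := by
  obtain ⟨j, hj⟩ := exists_lt_of_lt_ciSup hc
  obtain ⟨i, hi, hmax⟩ := Set.exists_max_image _ f hfin ⟨j, hj⟩
  have hci : c < f i := hi
  refine ⟨i, hci, le_antisymm (le_ciSup hf i) (ciSup_le fun k => ?_)⟩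
  by_cases hk : c < f k
  · exact hmax k hk
  · exact (not_lt.mp hk).trans hci.le

noncomputable def windowAvg (G : ℤ → ℝ) (a b : ℤ) : ℝ :=
  (∑ y ∈ Icc a b, G y) / (b - a + 1)

section windowAvg

variable {G : ℤ → ℝ} {a b : ℤ} {C : ℝ}

theorem sum_Icc_const_eq_mul_length (hab : a ≤ b) (C : ℝ) :
    ∑ _y ∈ Icc a b, C = C * (b - a + 1) := by
  rw [sum_const, Int.card_Icc, nsmul_eq_mul, ← Int.cast_natCast, Int.toNat_of_nonneg (by omega)]
  push_cast; ring

theorem windowAvg_self (G : ℤ → ℝ) (a : ℤ) : windowAvg G a a = G a := by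
  simp [windowAvg]

theorem window_length_pos (hab : a ≤ b) : (0 : ℝ) < b - a + 1 := by
  have : (a : ℝ) ≤ b := by exact_mod_cast hab
  linarith

theorem windowAvg_le (hab : a ≤ b) (hC : ∀ y ∈ Icc a b, G y ≤ C) : windowAvg G a b ≤ C := by
  rw [windowAvg, div_le_iff₀ (window_length_pos hab), ← sum_Icc_const_eq_mul_length hab]
  exact sum_le_sum hC

theorem windowAvg_lt (hC : ∀ y ∈ Icc a b, G y ≤ C) (hlt : ∃ y ∈ Icc a b, G y < C) :
    windowAvg G a b < C := by
  obtain ⟨y, hy, -⟩ := id hlt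
  have hab : a ≤ b := (mem_Icc.1 hy).1.trans (mem_Icc.1 hy).2
  rw [windowAvg, div_lt_iff₀ (window_length_pos hab), ← sum_Icc_const_eq_mul_length hab]
  exact sum_lt_sum hC hlt

theorem uHL_eq_iSup_windowAvg (G : ℤ → ℝ) (n : ℤ) :
    uHL G n = ⨆ p : ℕ × ℕ, windowAvg G (n - p.1) (n + p.2) := by
  unfold uHL windowAvg
  congr 1 with p
  push_cast
  ring

theorem bddAbove_range_windowAvg (hG : BddAbove (Set.range G)) (n : ℤ) :
    BddAbove (Set.range fun p : ℕ × ℕ => windowAvg G (n - p.1) (n + p.2)) := by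
  obtain ⟨C, hC⟩ := hG
  refine ⟨C, ?_⟩
  rintro _ ⟨p, rfl⟩
  exact windowAvg_le (by omega) fun y _ => hC ⟨y, rfl⟩

theorem windowAvg_le_uHL (hG : BddAbove (Set.range G)) {y : ℤ} (hay : a ≤ y) (hyb : y ≤ b) :
    windowAvg G a b ≤ uHL G y := by
  rw [uHL_eq_iSup_windowAvg]
  have h := le_ciSup (bddAbove_range_windowAvg hG y) ((y - a).toNat, (b - y).toNat)
  have ha : y - ((y - a).toNat : ℤ) = a := by omega
  have hb : y + ((b - y).toNat : ℤ) = b := by omega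
  dsimp only at h
  rwa [ha, hb] at h

theorem le_uHL (hG : BddAbove (Set.range G)) (y : ℤ) : G y ≤ uHL G y := by
  simpa only [windowAvg_self] using windowAvg_le_uHL hG (a := y) (b := y) le_rfl le_rfl

end windowAvg

theorem exists_windowAvg_eq_uHL {G : ℤ → ℝ} (hG : BddAbove (Set.range G)) {n n' n'' : ℤ}
    (h1 : n' < n) (h2 : n < n'') (hmax : max (uHL G n') (uHL G n'') < uHL G n) :
    ∃ l r, n' < l ∧ l ≤ n ∧ n ≤ r ∧ r < n'' ∧ windowAvg G l r = uHL G n := by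
  set c := max (uHL G n') (uHL G n'')
  set f := fun p : ℕ × ℕ => windowAvg G (n - p.1) (n + p.2)
  have hinside : ∀ p, c < f p → (p.1 : ℤ) < n - n' ∧ (p.2 : ℤ) < n'' - n := by
    intro p hp
    constructor <;> by_contra! hout
    · exact (windowAvg_le_uHL hG (y := n') (by omega) (by omega)).not_gt
        ((le_max_left _ _).trans_lt hp)
    · exact (windowAvg_le_uHL hG (y := n'') (by omega) (by omega)).not_gt
        ((le_max_right _ _).trans_lt hp)
  have hfin : {p | c < f p}.Finite := by
    refine (range (n - n').toNat ×ˢ range (n'' - n).toNat).finite_toSet.subset fun p hp => ?_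
    have := hinside p hp
    simp only [coe_product, coe_range, Set.mem_prod, Set.mem_Iio]
    omega
  rw [uHL_eq_iSup_windowAvg] at hmax ⊢
  obtain ⟨p, hp, hpeq⟩ :=
    exists_eq_ciSup_of_finite_superlevel (bddAbove_range_windowAvg hG n) hmax hfin
  have := hinside p hp
  exact ⟨n - p.1, n + p.2, by omega, by omega, by omega, by omega, hpeq⟩

theorem stmt11_general (G : ℤ → ℝ) (hBV : varZ G ≠ ⊤)
    (n n' n'' : ℤ) (h1 : n' < n) (h2 : n < n'')
    (hmax : max (uHL G n') (uHL G n'') < uHL G n)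
    (htop : ∀ y : ℤ, n' ≤ y → y ≤ n'' → uHL G y ≤ uHL G n) :
    uHL G n = G n := by
  have hG := bddAbove_range_of_varZ_ne_top hBV
  obtain ⟨l, r, hn'l, hln, hnr, hrn'', hlr⟩ := exists_windowAvg_eq_uHL hG h1 h2 hmax
  refine le_antisymm (not_lt.1 fun hlt => ?_) (le_uHL hG n)
  have hbound : ∀ y ∈ Icc l r, G y ≤ uHL G n := by
    intro y hy
    rw [mem_Icc] at hy
    exact (le_uHL hG y).trans (htop y (by omega) (by omega))
  exact (windowAvg_lt hbound ⟨n, mem_Icc.2 ⟨hln, hnr⟩, hlt⟩).ne hlr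

theorem stmt11 (G : ℤ → ℝ) (hG : ∀ n, 0 ≤ G n) (hBV : varZ G ≠ ⊤)
    (n n' n'' : ℤ) (h1 : n' < n) (h2 : n < n'')
    (hmax : max (uHL G n') (uHL G n'') < uHL G n)
    (htop : ∀ y : ℤ, n' ≤ y → y ≤ n'' → uHL G y ≤ uHL G n) :
    uHL G n = G n :=
  stmt11_general G hBV n n' n'' h1 h2 hmax htop
end
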